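/- Suppose f admits the Lévy–Khinchine representation with pair (γ, G), where γ ∈ ℝ and G is a finite signed Borel measure on ℝ satisfying ∫_ℝ (1+x²) d|G|(x) < ∞. Then Ln f is differentiable on ℝ and for every t ∈ ℝ: (Ln f)'(t) = iγ + ∫_ℝ K₁(t,x) dG(x), where K₁(t,x) := (ix·e^{itx} − i·sin x)(1+x²)/x² for x ≠ 0 and K₁(t,0) := −t. -/

import Mathlib

open MeasureTheory Complex Filter Finset

/-- Characteristic function of a Borel measure on ℝ. -/
noncomputable def charFun (μ : MeasureTheory.Measure ℝ) (t : ℝ) : ℂ :=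
  ∫ x, Complex.exp (Complex.I * t * x) ∂μ

/-- `g` is the distinguished logarithm of `f`: continuous, `g 0 = 0`, `exp ∘ g = f`. -/
def IsDistinguishedLog (g f : ℝ → ℂ) : Prop :=
  Continuous g ∧ g 0 = 0 ∧ ∀ t : ℝ, Complex.exp (g t) = f t

/-- Integral of a complex function against a finite signed measure, via the
Jordan decomposition. -/
noncomputable def sInt (G : MeasureTheory.SignedMeasure ℝ) (φ : ℝ → ℂ) : ℂ :=
  (∫ x, φ x ∂G.toJordanDecomposition.posPart) -
    (∫ x, φ x ∂G.toJordanDecomposition.negPart)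

/-- The Lévy–Khinchine integrand `K(t,x) = (e^{itx} - 1 - it sin x)(1+x²)/x²`,
with value `-t²/2` at `x = 0`. -/
noncomputable def Kfun (t x : ℝ) : ℂ :=
  if x = 0 then -(t ^ 2) / 2
  else (Complex.exp (Complex.I * t * x) - 1 - Complex.I * t * Real.sin x) * (1 + x ^ 2) / x ^ 2

/-- The kernel `C(h,x) = (cos(hx) - 1)(1+x²)/x²`, with value `-h²/2` at `x = 0`. -/
noncomputable def Cfun (h x : ℝ) : ℂ :=
  if x = 0 then -(h ^ 2) / 2
  else ((Real.cos (h * x) - 1) * (1 + x ^ 2) / x ^ 2 : ℝ)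

/-- `g` (the distinguished logarithm of `f`) is represented by the Lévy–Khinchine
formula with spectral pair `(γ, G)`. -/
def HasLK (g : ℝ → ℂ) (γ : ℝ) (G : MeasureTheory.SignedMeasure ℝ) : Prop :=
  ∀ t : ℝ, g t = Complex.I * t * γ + sInt G (Kfun t)

/-- Symmetric second finite difference of `g` with step `h`. -/
def delta2 (g : ℝ → ℂ) (h t : ℝ) : ℂ := g (t - h) + g (t + h) - 2 * g t

/-- `n`-fold convolution power of a measure on ℝ. -/
noncomputable def convPow (ν : MeasureTheory.Measure ℝ) : ℕ → MeasureTheory.Measure ℝ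
  | 0 => MeasureTheory.Measure.dirac 0
  | n + 1 => (convPow ν n).conv ν

/-- A probability measure `μ` on ℝ is infinitely divisible. -/
def IsInfDiv (μ : MeasureTheory.Measure ℝ) : Prop :=
  ∀ n : ℕ, 0 < n → ∃ ν : MeasureTheory.Measure ℝ,
    MeasureTheory.IsProbabilityMeasure ν ∧ convPow ν n = μ

/-- A probability measure `μ` on ℝ is rationally infinitely divisible:
`μ₁ = μ ∗ μ₂` for some infinitely divisible probability measures `μ₁, μ₂`. -/
def IsRatInfDiv (μ : MeasureTheory.Measure ℝ) : Prop :=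
  ∃ μ₁ μ₂ : MeasureTheory.Measure ℝ,
    MeasureTheory.IsProbabilityMeasure μ₁ ∧ MeasureTheory.IsProbabilityMeasure μ₂ ∧
    IsInfDiv μ₁ ∧ IsInfDiv μ₂ ∧ μ₁ = μ.conv μ₂

/-- The integrand `K₁(t,x) = (ix e^{itx} - i sin x)(1+x²)/x²`, with value `-t` at `x = 0`. -/
noncomputable def K1fun (t x : ℝ) : ℂ :=
  if x = 0 then -t
  else (Complex.I * x * Complex.exp (Complex.I * t * x) - Complex.I * Real.sin x) *
    (1 + x ^ 2) / x ^ 2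

/-! Differentiation under the integral sign, separately against the two parts of the Jordan
decomposition of `G`. The `t`-derivative of `K(t, x)` is `K₁(t, x)`, and
`|x e^{itx} - sin x| ≤ |x| |e^{itx} - 1| + |x - sin x| ≤ (|t| + 2) x²` gives the dominant
`|K₁(t, x)| ≤ (|t| + 2)(1 + x²)`, locally uniform in `t` and integrable by the moment condition. -/

lemma Real.abs_sub_sin_le_two_mul_sq (x : ℝ) : |x - Real.sin x| ≤ 2 * x ^ 2 := by
  rcases le_total |x| 1 with hx | hx
  · have hcube : |x| ^ 3 ≤ x ^ 2 := by
      rw [← sq_abs x, pow_succ]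
      exact mul_le_of_le_one_right (sq_nonneg _) hx
    linarith [Real.abs_sub_sin_le x, sq_nonneg x]
  · have hlin : |x - Real.sin x| ≤ 2 * |x| :=
      (abs_sub _ _).trans (by linarith [Real.abs_sin_le_abs (x := x)])
    nlinarith [sq_abs x]

lemma Kfun_zero_left (x : ℝ) : Kfun 0 x = 0 := by
  simp [Kfun]

lemma hasDerivAt_Kfun (x t : ℝ) : HasDerivAt (fun s => Kfun s x) (K1fun t x) t := by
  have hid : HasDerivAt (fun s : ℝ => (s : ℂ)) 1 t := by
    simpa using (hasDerivAt_id t).ofReal_comp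
  rcases eq_or_ne x 0 with rfl | hx
  · simp only [Kfun, K1fun, if_true]
    exact ((hid.pow 2).neg.div_const 2).congr_deriv (by push_cast; ring)
  · simp only [Kfun, K1fun, if_neg hx]
    have hexp := ((hid.const_mul Complex.I).mul_const (x : ℂ)).cexp
    have hsin := (hid.const_mul Complex.I).mul_const ((Real.sin x : ℝ) : ℂ)
    exact ((((hexp.sub_const 1).sub hsin).mul_const (1 + (x : ℂ) ^ 2)).div_const
      ((x : ℂ) ^ 2)).congr_deriv (by ring)

lemma norm_K1fun_le {R t : ℝ} (ht : |t| ≤ R) (x : ℝ) :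
    ‖K1fun t x‖ ≤ (R + 2) * (1 + x ^ 2) := by
  rcases eq_or_ne x 0 with rfl | hx
  · simp only [K1fun, if_true, norm_neg, Complex.norm_real, Real.norm_eq_abs]
    linarith
  simp only [K1fun, if_neg hx]
  have hnum : ‖Complex.I * x * Complex.exp (Complex.I * t * x) - Complex.I * Real.sin x‖
      ≤ (R + 2) * x ^ 2 := by
    have hsplit : Complex.I * x * Complex.exp (Complex.I * t * x) - Complex.I * Real.sin x
        = Complex.I * (x * (Complex.exp (Complex.I * t * x) - 1))
          + Complex.I * ((x - Real.sin x : ℝ) : ℂ) := by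
      push_cast; ring
    have hexp : |x| * ‖Complex.exp (Complex.I * t * x) - 1‖ ≤ |t| * x ^ 2 := by
      have hlip := Real.norm_exp_I_mul_ofReal_sub_one_le (x := t * x)
      push_cast [← mul_assoc, Real.norm_eq_abs] at hlip
      calc |x| * ‖Complex.exp (Complex.I * t * x) - 1‖ ≤ |x| * |t * x| :=
            mul_le_mul_of_nonneg_left hlip (abs_nonneg x)
        _ = |t| * x ^ 2 := by rw [abs_mul, ← sq_abs x]; ring
    rw [hsplit]
    refine (norm_add_le _ _).trans ?_
    simp only [norm_mul, Complex.norm_I, one_mul, Complex.norm_real, Real.norm_eq_abs]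
    nlinarith [Real.abs_sub_sin_le_two_mul_sq x, sq_nonneg x]
  have hnorm : ‖(1 + (x : ℂ) ^ 2) / (x : ℂ) ^ 2‖ = (1 + x ^ 2) / x ^ 2 := by
    rw [← Complex.ofReal_pow, ← Complex.ofReal_one, ← Complex.ofReal_add, ← Complex.ofReal_div,
      Complex.norm_real, Real.norm_of_nonneg (by positivity)]
  rw [mul_div_assoc, norm_mul, hnorm]
  calc _ ≤ (R + 2) * x ^ 2 * ((1 + x ^ 2) / x ^ 2) :=
        mul_le_mul_of_nonneg_right hnum (by positivity)
    _ = (R + 2) * (1 + x ^ 2) := by field_simp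

/-- Mean value theorem in `t`, since `K(0, x) = 0`. -/
lemma norm_Kfun_le (t x : ℝ) : ‖Kfun t x‖ ≤ (|t| + 2) * (1 + x ^ 2) * |t| := by
  have hmvt := (convex_closedBall (0 : ℝ) |t|).norm_image_sub_le_of_norm_hasDerivWithin_le
    (f := fun s => Kfun s x)
    (fun s _ => (hasDerivAt_Kfun x s).hasDerivWithinAt)
    (fun s hs => norm_K1fun_le (by simpa using hs) x)
    (Metric.mem_closedBall_self (abs_nonneg t)) (by simp : t ∈ Metric.closedBall 0 |t|)
  simpa [Kfun_zero_left] using hmvt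

lemma measurable_Kfun (t : ℝ) : Measurable (Kfun t) :=
  Measurable.ite (measurableSet_singleton 0) measurable_const (by fun_prop)

lemma measurable_K1fun (t : ℝ) : Measurable (K1fun t) :=
  Measurable.ite (measurableSet_singleton 0) measurable_const (by fun_prop)

lemma hasDerivAt_integral_Kfun {ν : Measure ℝ}
    (hmom : Integrable (fun x : ℝ => 1 + x ^ 2) ν) (t : ℝ) :
    HasDerivAt (fun s => ∫ x, Kfun s x ∂ν) (∫ x, K1fun t x ∂ν) t := by
  have hKint : Integrable (Kfun t) ν :=
    ((hmom.const_mul _).mul_const |t|).mono' (measurable_Kfun t).aestronglyMeasurable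
      (.of_forall (norm_Kfun_le t))
  have hbound : ∀ᵐ x ∂ν, ∀ s ∈ Metric.ball t 1, ‖K1fun s x‖ ≤ (|t| + 1 + 2) * (1 + x ^ 2) :=
    .of_forall fun x s hs => norm_K1fun_le
      (by linarith [abs_sub_abs_le_abs_sub s t, Real.dist_eq s t ▸ Metric.mem_ball.mp hs]) x
  exact (hasDerivAt_integral_of_dominated_loc_of_deriv_le (Metric.ball_mem_nhds t one_pos)
    (.of_forall fun s => (measurable_Kfun s).aestronglyMeasurable) hKint
    (measurable_K1fun t).aestronglyMeasurable hbound (hmom.const_mul _)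
    (.of_forall fun x s _ => hasDerivAt_Kfun x s)).2

lemma hasDerivAt_sInt_Kfun {G : SignedMeasure ℝ}
    (hmom : Integrable (fun x : ℝ => 1 + x ^ 2) G.totalVariation) (t : ℝ) :
    HasDerivAt (fun s => sInt G (Kfun s)) (sInt G (K1fun t)) t := by
  obtain ⟨hpos, hneg⟩ := integrable_add_measure.mp hmom
  exact (hasDerivAt_integral_Kfun hpos t).sub (hasDerivAt_integral_Kfun hneg t)

theorem deriv_of_hasLK_general
    (g : ℝ → ℂ)
    (γ : ℝ) (G : MeasureTheory.SignedMeasure ℝ) (hLK : HasLK g γ G)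
    (hmom : MeasureTheory.Integrable (fun x : ℝ => 1 + x ^ 2) G.totalVariation) :
    ∀ t : ℝ, HasDerivAt g (Complex.I * γ + sInt G (K1fun t)) t := by
  intro t
  have hdrift : HasDerivAt (fun s : ℝ => Complex.I * s * γ) (Complex.I * γ) t := by
    simpa using (((hasDerivAt_id t).ofReal_comp).const_mul Complex.I).mul_const (γ : ℂ)
  rw [show g = _ from funext hLK]
  exact hdrift.add (hasDerivAt_sInt_Kfun hmom t)

/-- under the moment condition `∫ (1+x²) d|G| < ∞`, the distinguished
logarithm is differentiable with `(Ln f)'(t) = iγ + ∫ K₁(t,x) dG(x)`. -/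
theorem deriv_of_hasLK (μ : MeasureTheory.Measure ℝ)
    [MeasureTheory.IsProbabilityMeasure μ]
    (g : ℝ → ℂ) (hf : ∀ t : ℝ, _root_.charFun μ t ≠ 0)
    (hg : IsDistinguishedLog g (_root_.charFun μ))
    (γ : ℝ) (G : MeasureTheory.SignedMeasure ℝ) (hLK : HasLK g γ G)
    (hmom : MeasureTheory.Integrable (fun x : ℝ => 1 + x ^ 2) G.totalVariation) :
    ∀ t : ℝ, HasDerivAt g (Complex.I * γ + sInt G (K1fun t)) t :=
  deriv_of_hasLK_general g γ G hLK hmom
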